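/- arXiv:1306.2862 — 4 statements merged into one kernel-verified Lean document; each statement's English description precedes it below -/
import Mathlib

section
/- Let a < b be coprime positive integers, S = ⟨a,b⟩, and n ∈ S written as n = ua + vb with 0 ≤ u < b (so v ≥ 0). Then Ap(S,n) = {αa + βb : u ≤ α < b, 0 ≤ β < v} ∪ {αa + βb : 0 ≤ α < u, 0 ≤ β < a + v}. -/
/-- A numerical semigroup: a cofinite submonoid of ℕ, viewed inside ℤ. -/
def IsNumSgp (S : Set ℤ) : Prop :=
  0 ∈ S ∧ (∀ x ∈ S, 0 ≤ x) ∧ (∀ x ∈ S, ∀ y ∈ S, x + y ∈ S) ∧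
    {x : ℤ | 0 ≤ x ∧ x ∉ S}.Finite

/-- `c` is the conductor of `S`: least integer with `c + ℕ ⊆ S`. -/
def IsConductor (S : Set ℤ) (c : ℤ) : Prop :=
  (∀ n, c ≤ n → n ∈ S) ∧ ∀ c', (∀ n, c' ≤ n → n ∈ S) → c ≤ c'

/-- Set of divisors of `x` in `S`: `D(x) = {s ∈ S | x - s ∈ S}`. -/
def divs (S : Set ℤ) (x : ℤ) : Set ℤ := {s | s ∈ S ∧ x - s ∈ S}

/-- Genus: number of gaps. -/
noncomputable def genus (S : Set ℤ) : ℕ := {x : ℤ | 0 ≤ x ∧ x ∉ S}.ncard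

/-- Apéry set of `S` with respect to the integer `n`. -/
def Ap (S : Set ℤ) (n : ℤ) : Set ℤ := {s | s ∈ S ∧ s - n ∉ S}

/-- The numerical semigroup generated by `a` and `b`. -/
def gen2 (a b : ℤ) : Set ℤ := {n | ∃ x y : ℕ, n = (x : ℤ) * a + (y : ℤ) * b}

/-!
Since `gcd(a, b) = 1`, every integer has a unique representation `α a + β b` with `0 ≤ α < b`,
and it lies in `⟨a, b⟩` exactly when `β ≥ 0`. For `s = α a + β b` in this form,
`s - n = (α - u) a + (β - v) b` is again of this form when `u ≤ α`, while for `α < u` it is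
`(α - u + b) a + (β - v - a) b`; hence `s - n ∉ ⟨a, b⟩` means `β < v`, resp. `β < a + v`.
-/

lemma mem_gen2_iff_nonneg {a b α β : ℤ} (ha : 0 ≤ a) (hb : 0 < b) (hcop : IsCoprime a b)
    (hα0 : 0 ≤ α) (hαb : α < b) :
    α * a + β * b ∈ gen2 a b ↔ 0 ≤ β := by
  constructor
  · rintro ⟨x, y, hxy⟩
    have hdvd : b ∣ ((x : ℤ) - α) * a := ⟨β - y, by linear_combination -hxy⟩
    obtain ⟨k, hk⟩ := hcop.symm.dvd_of_dvd_mul_right hdvd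
    have hk0 : 0 ≤ k := by
      have : 0 < b * (k + 1) := by linarith [Int.natCast_nonneg x]
      exact Int.lt_add_one_iff.mp (pos_of_mul_pos_right this hb.le)
    have hβ : β = y + k * a :=
      mul_left_cancel₀ hb.ne' (by linear_combination hxy + a * hk)
    rw [hβ]
    positivity
  · intro hβ
    exact ⟨α.toNat, β.toNat, by rw [Int.toNat_of_nonneg hα0, Int.toNat_of_nonneg hβ]⟩

lemma exists_normal_form_of_mem_gen2 {a b s : ℤ} (ha : 0 ≤ a) (hb : 0 < b) (hs : s ∈ gen2 a b) :
    ∃ α β : ℤ, 0 ≤ α ∧ α < b ∧ 0 ≤ β ∧ s = α * a + β * b := by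
  obtain ⟨x, y, rfl⟩ := hs
  refine ⟨x % b, y + x / b * a, Int.emod_nonneg _ hb.ne', Int.emod_lt_of_pos _ hb,
    by have := Int.ediv_nonneg (Int.natCast_nonneg x) hb.le; positivity, ?_⟩
  linear_combination -a * Int.mul_ediv_add_emod (x : ℤ) b

lemma sub_mem_gen2_iff_of_le {a b α β u v : ℤ} (ha : 0 ≤ a) (hb : 0 < b) (hcop : IsCoprime a b)
    (hαb : α < b) (hu0 : 0 ≤ u) (huα : u ≤ α) :
    α * a + β * b - (u * a + v * b) ∈ gen2 a b ↔ v ≤ β := by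
  rw [show α * a + β * b - (u * a + v * b) = (α - u) * a + (β - v) * b by ring,
    mem_gen2_iff_nonneg ha hb hcop (by linarith) (by linarith), sub_nonneg]

lemma sub_mem_gen2_iff_of_lt {a b α β u v : ℤ} (ha : 0 ≤ a) (hb : 0 < b) (hcop : IsCoprime a b)
    (hα0 : 0 ≤ α) (hub : u < b) (hαu : α < u) :
    α * a + β * b - (u * a + v * b) ∈ gen2 a b ↔ a + v ≤ β := by
  rw [show α * a + β * b - (u * a + v * b) = (α - u + b) * a + (β - v - a) * b by ring,
    mem_gen2_iff_nonneg ha hb hcop (by linarith) (by linarith)]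
  omega

theorem stmt_6_general (a b : ℤ) (ha : 0 < a) (hab : a < b) (hcop : IsCoprime a b)
    (n u v : ℤ) (hnuv : n = u * a + v * b)
    (hu0 : 0 ≤ u) (hub : u < b) :
    Ap (gen2 a b) n =
      {s : ℤ | ∃ α β : ℤ, u ≤ α ∧ α < b ∧ 0 ≤ β ∧ β < v ∧ s = α * a + β * b} ∪
      {s : ℤ | ∃ α β : ℤ, 0 ≤ α ∧ α < u ∧ 0 ≤ β ∧ β < a + v ∧ s = α * a + β * b} := by
  have hb : 0 < b := ha.trans hab
  subst hnuv
  ext s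
  simp only [Ap, Set.mem_ofPred_eq, Set.mem_union]
  constructor
  · rintro ⟨hs, hsn⟩
    obtain ⟨α, β, hα0, hαb, hβ0, rfl⟩ := exists_normal_form_of_mem_gen2 ha.le hb hs
    rcases le_or_gt u α with huα | hαu
    · rw [sub_mem_gen2_iff_of_le ha.le hb hcop hαb hu0 huα, not_le] at hsn
      exact Or.inl ⟨α, β, huα, hαb, hβ0, hsn, rfl⟩
    · rw [sub_mem_gen2_iff_of_lt ha.le hb hcop hα0 hub hαu, not_le] at hsn
      exact Or.inr ⟨α, β, hα0, hαu, hβ0, hsn, rfl⟩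
  · rintro (⟨α, β, huα, hαb, hβ0, hβv, rfl⟩ | ⟨α, β, hα0, hαu, hβ0, hβv, rfl⟩)
    · refine ⟨(mem_gen2_iff_nonneg ha.le hb hcop (hu0.trans huα) hαb).mpr hβ0, ?_⟩
      rw [sub_mem_gen2_iff_of_le ha.le hb hcop hαb hu0 huα, not_le]
      exact hβv
    · refine ⟨(mem_gen2_iff_nonneg ha.le hb hcop hα0 (hαu.trans hub)).mpr hβ0, ?_⟩
      rw [sub_mem_gen2_iff_of_lt ha.le hb hcop hα0 hub hαu, not_le]
      exact hβv

theorem stmt_6 (a b : ℤ) (ha : 0 < a) (hab : a < b) (hcop : IsCoprime a b)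
    (n u v : ℤ) (hnS : n ∈ gen2 a b) (hnuv : n = u * a + v * b)
    (hu0 : 0 ≤ u) (hub : u < b) (hv : 0 ≤ v) :
    Ap (gen2 a b) n =
      {s : ℤ | ∃ α β : ℤ, u ≤ α ∧ α < b ∧ 0 ≤ β ∧ β < v ∧ s = α * a + β * b} ∪
      {s : ℤ | ∃ α β : ℤ, 0 ≤ α ∧ α < u ∧ 0 ≤ β ∧ β < a + v ∧ s = α * a + β * b} :=
  stmt_6_general a b ha hab hcop n u v hnuv hu0 hub
end

section
/- Let a < b be coprime integers greater than 2, S = ⟨a,b⟩, m ≥ 2c − 1, and i, h ∈ {0,…,b−1} such that L = {m ⊕ i, m ⊕ (i+1), …, m ⊕ (i+h)} is an amenable interval (in particular ia mod b < a). Then D(m ⊕ i + ha) ∩ [m, m+b) = L. -/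
theorem Int.ModEq.cancel_right_of_isCoprime {a b x y : ℤ} (hcop : IsCoprime a b)
    (h : x * a ≡ y * a [ZMOD b]) : x ≡ y [ZMOD b] :=
  Int.modEq_iff_dvd.2 <| hcop.symm.dvd_of_dvd_mul_right <| by rw [sub_mul]; exact h.dvd

theorem Int.ModEq.add_le_of_lt {b x y : ℤ} (h : x ≡ y [ZMOD b]) (hlt : x < y) : x + b ≤ y := by
  have := Int.le_of_dvd (sub_pos.2 hlt) h.dvd
  omega

theorem Int.exists_mul_modEq_of_isCoprime {a b : ℤ} (hcop : IsCoprime a b) (hb : 0 < b)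
    (n : ℤ) : ∃ t, 0 ≤ t ∧ t < b ∧ t * a ≡ n [ZMOD b] := by
  obtain ⟨u, v, huv⟩ := hcop
  refine ⟨n * u % b, Int.emod_nonneg _ hb.ne', Int.emod_lt_of_pos _ hb, ?_⟩
  calc n * u % b * a ≡ n * u * a [ZMOD b] := (Int.mod_modEq _ _).mul_right a
    _ ≡ n [ZMOD b] := Int.modEq_iff_dvd.2 ⟨n * v, by linear_combination (-n) * huv⟩

section gen2

variable {a b : ℤ}

theorem mul_add_mul_mem_gen2 {x y : ℤ} (hx : 0 ≤ x) (hy : 0 ≤ y) : x * a + y * b ∈ gen2 a b :=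
  ⟨x.toNat, y.toNat, by rw [Int.toNat_of_nonneg hx, Int.toNat_of_nonneg hy]⟩

theorem mem_gen2_of_mul_modEq (hb : 0 < b) {n p : ℤ} (hp : 0 ≤ p) (hpn : p * a ≡ n [ZMOD b])
    (hlt : p * a < n + b) : n ∈ gen2 a b := by
  obtain ⟨k, hk⟩ := hpn.dvd
  have hk0 : 0 ≤ k := by nlinarith
  rw [show n = p * a + k * b by linarith]
  exact mul_add_mul_mem_gen2 hp hk0

theorem exists_modEq_mul_le_of_mem_gen2 (hcop : IsCoprime a b) (hb : 0 < b) {n q : ℤ}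
    (hn : n ∈ gen2 a b) (hq : q * a ≡ n [ZMOD b]) : ∃ x, 0 ≤ x ∧ x ≡ q [ZMOD b] ∧ x * a ≤ n := by
  obtain ⟨x, y, rfl⟩ := hn
  refine ⟨x, by positivity, Int.ModEq.cancel_right_of_isCoprime hcop ?_, by nlinarith⟩
  calc (x : ℤ) * a ≡ x * a + y * b [ZMOD b] := Int.modEq_iff_dvd.2 ⟨y, by ring⟩
    _ ≡ q * a [ZMOD b] := hq.symm

theorem mem_gen2_of_le (ha : 0 < a) (hb : 0 < b) (hcop : IsCoprime a b) {n : ℤ}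
    (hn : (a - 1) * (b - 1) ≤ n) : n ∈ gen2 a b := by
  obtain ⟨p, hp0, hpb, hpn⟩ := Int.exists_mul_modEq_of_isCoprime hcop hb n
  exact mem_gen2_of_mul_modEq hb hp0 hpn (by nlinarith)

theorem sub_mem_gen2_iff (ha : 0 < a) (hb : 0 < b) (hcop : IsCoprime a b) {r s t h : ℤ}
    (hr0 : 0 ≤ r) (hra : r < a) (hs0 : 0 ≤ s) (hsb : s < b) (ht0 : 0 ≤ t) (htb : t < b)
    (hts : t * a + r ≡ s [ZMOD b]) : r + h * a - s ∈ gen2 a b ↔ t ≤ h := by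
  have hmod : (h - t) * a ≡ r + h * a - s [ZMOD b] := by
    rw [Int.modEq_iff_dvd, show r + h * a - s - (h - t) * a = -(s - (t * a + r)) by ring]
    exact hts.dvd.neg_right
  constructor
  · intro hn
    by_contra! hht
    obtain ⟨x, hx0, hxq, hxn⟩ := exists_modEq_mul_le_of_mem_gen2 hcop hb hn hmod
    have hx : h - t + b ≤ x := hxq.symm.add_le_of_lt (by omega)
    nlinarith [mul_le_mul_of_nonneg_right hx ha.le]
  · intro hth
    exact mem_gen2_of_mul_modEq hb (by omega) hmod (by nlinarith)

end gen2

theorem add_mem_image_Icc_iff {a b m i h s t : ℤ} (hcop : IsCoprime a b)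
    (hs0 : 0 ≤ s) (hsb : s < b) (ht0 : 0 ≤ t) (htb : t < b)
    (hts : t * a + i * a % b ≡ s [ZMOD b]) :
    m + s ∈ (fun j => m + j * a % b) '' Set.Icc i (i + h) ↔ t ≤ h := by
  have hts' : (i + t) * a ≡ s [ZMOD b] := by
    calc (i + t) * a = t * a + i * a := by ring
      _ ≡ t * a + i * a % b [ZMOD b] := ((Int.mod_modEq _ _).add_left _).symm
      _ ≡ s [ZMOD b] := hts
  simp only [Set.mem_image, Set.mem_Icc, add_right_inj]
  constructor
  · rintro ⟨j, ⟨hij, hjh⟩, hjs⟩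
    have hjt : (j - i) * a ≡ t * a [ZMOD b] := by
      refine Int.ModEq.add_left_cancel' (i * a) ?_
      calc i * a + (j - i) * a = j * a := by ring
        _ ≡ s [ZMOD b] := hjs ▸ (Int.mod_modEq _ _).symm
        _ ≡ (i + t) * a [ZMOD b] := hts'.symm
        _ = i * a + t * a := by ring
    by_contra! hht
    have := (Int.ModEq.cancel_right_of_isCoprime hcop hjt).add_le_of_lt (by omega)
    omega
  · intro hth
    exact ⟨i + t, ⟨by omega, by omega⟩, hts'.eq.trans (Int.emod_eq_of_lt hs0 hsb)⟩

theorem stmt_12_general (a b : ℤ) (ha : 2 < a) (hab : a < b) (hcop : IsCoprime a b)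
    (m : ℤ) (hm : 2 * (a * b - a - b + 1) - 1 ≤ m)
    (i h : ℤ)
    (L : Set ℤ) (hL : L = (fun j => m + (j * a) % b) '' Set.Icc i (i + h))
    (hlow : (i * a) % b < a) :
    divs (gen2 a b) (m + (i * a) % b + h * a) ∩ Set.Ico m (m + b) = L := by
  have ha0 : 0 < a := by omega
  have hb0 : 0 < b := by omega
  have hr0 : 0 ≤ i * a % b := Int.emod_nonneg _ hb0.ne'
  subst hL
  ext d
  by_cases hd : d ∈ Set.Ico m (m + b)
  · obtain ⟨s, rfl⟩ : ∃ s, d = m + s := ⟨d - m, by ring⟩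
    have hs0 : 0 ≤ s := by linarith [hd.1]
    have hsb : s < b := by linarith [hd.2]
    obtain ⟨t, ht0, htb, hts⟩ := Int.exists_mul_modEq_of_isCoprime hcop hb0 (s - i * a % b)
    replace hts : t * a + i * a % b ≡ s [ZMOD b] := by
      simpa using hts.add_right (i * a % b)
    have hsS : m + s ∈ gen2 a b := mem_gen2_of_le ha0 hb0 hcop (by nlinarith)
    rw [add_mem_image_Icc_iff hcop hs0 hsb ht0 htb hts,
      ← sub_mem_gen2_iff ha0 hb0 hcop hr0 hlow hs0 hsb ht0 htb hts,
      show i * a % b + h * a - s = m + i * a % b + h * a - (m + s) by ring]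
    simp only [Set.mem_inter_iff, divs, Set.mem_ofPred_eq, hsS, hd, true_and, and_true]
  · refine iff_of_false (fun hmem => hd hmem.2) ?_
    rintro ⟨j, -, rfl⟩
    exact hd ⟨by simp [Int.emod_nonneg _ hb0.ne'], by simp [Int.emod_lt_of_pos _ hb0]⟩

theorem stmt_12 (a b : ℤ) (ha : 2 < a) (hab : a < b) (hcop : IsCoprime a b)
    (m : ℤ) (hm : 2 * (a * b - a - b + 1) - 1 ≤ m)
    (i h : ℤ) (hi0 : 0 ≤ i) (hib : i ≤ b - 1) (hh0 : 0 ≤ h) (hhb : h ≤ b - 1)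
    (L : Set ℤ) (hL : L = (fun j => m + (j * a) % b) '' Set.Icc i (i + h))
    (hamen : ∀ x ∈ L, divs (gen2 a b) x ∩ Set.Ici m ⊆ L)
    (hlow : (i * a) % b < a) :
    divs (gen2 a b) (m + (i * a) % b + h * a) ∩ Set.Ico m (m + b) = L :=
  stmt_12_general a b ha hab hcop m hm i h L hL hlow
end

section
/- Let S be a numerical semigroup, m ≥ 2c − 1, and n ≤ n′ natural numbers. Then #(D(m+n) ∩ [m,∞)) ≤ #(D(m+n′) ∩ [m,∞)). -/
/-! Translation by `n' - n` injects `D(m+n) ∩ [m,∞)` into `D(m+n') ∩ [m,∞)`: it leaves the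
cofactor unchanged, and a divisor `s ≥ max m 0` is at least the conductor once `m ≥ 2c - 1`,
so its translate stays in `S`. -/

theorem divs_subset_Icc {S : Set ℤ} (hS : ∀ s ∈ S, 0 ≤ s) (x : ℤ) :
    divs S x ⊆ Set.Icc 0 x := by
  rintro s ⟨hs, hxs⟩
  have := hS _ hxs
  exact ⟨hS s hs, by omega⟩

theorem add_mem_divs {S : Set ℤ} {c x s d : ℤ} (hc : ∀ n, c ≤ n → n ∈ S)
    (hs : s ∈ divs S x) (hcs : c ≤ s) (hd : 0 ≤ d) : s + d ∈ divs S (x + d) :=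
  ⟨hc _ (by omega), by simpa only [add_sub_add_right_eq_sub] using hs.2⟩

theorem ncard_divs_inter_Ici_mono {S : Set ℤ} (hS : ∀ s ∈ S, 0 ≤ s) {c m x y : ℤ}
    (hc : ∀ n, c ≤ n → n ∈ S) (hcm : c ≤ max m 0) (hxy : x ≤ y) :
    (divs S x ∩ Set.Ici m).ncard ≤ (divs S y ∩ Set.Ici m).ncard := by
  have hshift : (· + (y - x)) '' (divs S x ∩ Set.Ici m) ⊆ divs S y ∩ Set.Ici m := by
    rintro _ ⟨s, ⟨hs, hms⟩, rfl⟩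
    have hs0 := hS s hs.1
    have hms : m ≤ s := hms
    refine ⟨?_, show m ≤ s + (y - x) by omega⟩
    simpa only [add_sub_cancel] using add_mem_divs hc hs (by omega) (sub_nonneg.2 hxy)
  calc (divs S x ∩ Set.Ici m).ncard
      = ((· + (y - x)) '' (divs S x ∩ Set.Ici m)).ncard :=
        (Set.ncard_image_of_injective _ (add_left_injective _)).symm
    _ ≤ (divs S y ∩ Set.Ici m).ncard :=
        Set.ncard_le_ncard hshift
          (((Set.finite_Icc 0 y).subset (divs_subset_Icc hS y)).inter_of_left _)

theorem stmt_14_general (S : Set ℤ) (hS : IsNumSgp S) (c : ℤ) (hc : IsConductor S c)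
    (m : ℤ) (hm : 2 * c - 1 ≤ m) (n n' : ℤ) (hnn' : n ≤ n') :
    (divs S (m + n) ∩ Set.Ici m).ncard ≤ (divs S (m + n') ∩ Set.Ici m).ncard :=
  ncard_divs_inter_Ici_mono hS.2.1 hc.1 (by omega) (by omega)

theorem stmt_14 (S : Set ℤ) (hS : IsNumSgp S) (c : ℤ) (hc : IsConductor S c)
    (m : ℤ) (hm : 2 * c - 1 ≤ m) (n n' : ℤ) (hn : 0 ≤ n) (hnn' : n ≤ n') :
    (divs S (m + n) ∩ Set.Ici m).ncard ≤ (divs S (m + n') ∩ Set.Ici m).ncard :=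
  stmt_14_general S hS c hc m hm n n' hnn'
end

section
/- Let S be a numerical semigroup with genus g and conductor c, m ≥ 2c − 1, and enumerate S = {ρ₁ = 0 < ρ₂ < ⋯}. Then for every r ≥ 1, #D(m + ρᵣ) = m + 1 − 2g + ρᵣ, and moreover ρₜ − ρᵣ ≥ t − r for all t ≥ r. -/
def gaps (S : Set ℤ) : Set ℤ := {x : ℤ | 0 ≤ x ∧ x ∉ S}

theorem genus_eq_ncard_gaps (S : Set ℤ) : genus S = (gaps S).ncard := rfl

section Counting

variable {S : Set ℤ} {x : ℤ}

theorem Icc_eq_divs_union_gaps_union_reflect (hS : ∀ s ∈ S, 0 ≤ s)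
    (hgap : ∀ y ∈ gaps S, 2 * y < x) :
    Set.Icc 0 x = divs S x ∪ (gaps S ∪ (x - ·) '' gaps S) := by
  ext s
  constructor
  · rintro ⟨h0, hx⟩
    by_cases hs : s ∈ S
    · by_cases hxs : x - s ∈ S
      · exact Or.inl ⟨hs, hxs⟩
      · exact Or.inr (Or.inr ⟨x - s, ⟨by omega, hxs⟩, by ring⟩)
    · exact Or.inr (Or.inl ⟨h0, hs⟩)
  · rintro (⟨hs, hxs⟩ | hy | ⟨y, hy, rfl⟩)
    · exact ⟨hS s hs, by linarith [hS _ hxs]⟩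
    · exact ⟨hy.1, by linarith [hgap _ hy, hy.1]⟩
    · exact ⟨by linarith [hgap _ hy, hy.1], by linarith [hy.1]⟩

theorem disjoint_divs_gaps_union_reflect :
    Disjoint (divs S x) (gaps S ∪ (x - ·) '' gaps S) := by
  rw [Set.disjoint_left]
  rintro s ⟨hs, hxs⟩ (hgs | ⟨y, hy, rfl⟩)
  · exact hgs.2 hs
  · exact hy.2 (by simpa using hxs)

theorem disjoint_gaps_reflect (hgap : ∀ y ∈ gaps S, 2 * y < x) :
    Disjoint (gaps S) ((x - ·) '' gaps S) := by
  rw [Set.disjoint_left]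
  rintro _ hs ⟨y, hy, rfl⟩
  linarith [hgap _ hs, hgap _ hy]

theorem ncard_divs_add_two_mul_genus (hS : ∀ s ∈ S, 0 ≤ s) (hfin : (gaps S).Finite)
    (hx : -1 ≤ x) (hgap : ∀ y ∈ gaps S, 2 * y < x) :
    ((divs S x).ncard : ℤ) + 2 * genus S = x + 1 := by
  have hdivs_fin : (divs S x).Finite :=
    (Set.finite_Icc 0 x).subset <| by
      rw [Icc_eq_divs_union_gaps_union_reflect hS hgap]; exact Set.subset_union_left
  have hreflect : ((x - ·) '' gaps S).ncard = (gaps S).ncard :=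
    Set.ncard_image_of_injective _ sub_right_injective
  have hIcc : ((Set.Icc 0 x).ncard : ℤ) = x + 1 := by
    rw [← Finset.coe_Icc, Set.ncard_coe_finset, Int.card_Icc]; omega
  rw [Icc_eq_divs_union_gaps_union_reflect hS hgap,
    Set.ncard_union_eq disjoint_divs_gaps_union_reflect hdivs_fin (hfin.union (hfin.image _)),
    Set.ncard_union_eq (disjoint_gaps_reflect hgap) hfin (hfin.image _), hreflect] at hIcc
  rw [genus_eq_ncard_gaps]
  push_cast at hIcc
  omega

end Counting

theorem IsConductor.nonneg {S : Set ℤ} {c : ℤ} (hS : ∀ s ∈ S, 0 ≤ s) (hc : IsConductor S c) :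
    0 ≤ c := by
  by_contra! h
  linarith [hS _ (hc.1 (-1) (by omega))]

theorem IsConductor.lt_of_mem_gaps {S : Set ℤ} {c y : ℤ} (hc : IsConductor S c)
    (hy : y ∈ gaps S) : y < c := by
  by_contra! h
  exact hy.2 (hc.1 y h)

theorem sub_le_sub_of_strictMono_from_one (ρ : ℕ → ℤ)
    (hmono : ∀ i j, 1 ≤ i → i < j → ρ i < ρ j) {r t : ℕ} (hr : 1 ≤ r) (hrt : r ≤ t) :
    (t : ℤ) - r ≤ ρ t - ρ r := by
  induction t, hrt using Nat.le_induction with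
  | base => simp
  | succ n hn ih =>
    have := hmono n (n + 1) (hr.trans hn) n.lt_succ_self
    push_cast
    omega

theorem stmt_16_general (S : Set ℤ) (hS : IsNumSgp S) (c : ℤ) (hc : IsConductor S c)
    (ρ : ℕ → ℤ)
    (hmono : ∀ i j, 1 ≤ i → i < j → ρ i < ρ j)
    (hrange : S = {x | ∃ k, 1 ≤ k ∧ ρ k = x})
    (m : ℤ) (hm : 2 * c - 1 ≤ m) :
    (∀ r : ℕ, 1 ≤ r →
      ((divs S (m + ρ r)).ncard : ℤ) = m + 1 - 2 * (genus S : ℤ) + ρ r) ∧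
    (∀ r t : ℕ, 1 ≤ r → r ≤ t → (t : ℤ) - (r : ℤ) ≤ ρ t - ρ r) := by
  obtain ⟨-, hnonneg, -, hfin⟩ := hS
  refine ⟨fun r hr => ?_, fun r t => sub_le_sub_of_strictMono_from_one ρ hmono⟩
  have hρr : 0 ≤ ρ r := hnonneg _ (by rw [hrange]; exact ⟨r, hr, rfl⟩)
  have hc0 := hc.nonneg hnonneg
  have hcount := ncard_divs_add_two_mul_genus (x := m + ρ r) hnonneg hfin (by omega)
    fun y hy => by linarith [hc.lt_of_mem_gaps hy]
  linarith

theorem stmt_16 (S : Set ℤ) (hS : IsNumSgp S) (c : ℤ) (hc : IsConductor S c)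
    (ρ : ℕ → ℤ) (hρ1 : ρ 1 = 0)
    (hmono : ∀ i j, 1 ≤ i → i < j → ρ i < ρ j)
    (hrange : S = {x | ∃ k, 1 ≤ k ∧ ρ k = x})
    (m : ℤ) (hm : 2 * c - 1 ≤ m) :
    (∀ r : ℕ, 1 ≤ r →
      ((divs S (m + ρ r)).ncard : ℤ) = m + 1 - 2 * (genus S : ℤ) + ρ r) ∧
    (∀ r t : ℕ, 1 ≤ r → r ≤ t → (t : ℤ) - (r : ℤ) ≤ ρ t - ρ r) :=
  stmt_16_general S hS c hc ρ hmono hrange m hm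
end
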